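/- Let p be an odd prime, let r ≥ 2 be an integer, and let n = 2^r·p. Define A = {1 + i·2^r : 0 ≤ i ≤ (p−1)/2} ∪ {1 + j·2^r + n/2 : 1 ≤ j ≤ (p−1)/2} and B = {1 − i·2^r : 0 ≤ i ≤ (p−1)/2} ∪ {1 − j·2^r + n/2 : 1 ≤ j ≤ (p−1)/2} as subsets of ℤ/nℤ. Then every element of A ∪ B is odd; there is a unique integer ℓ with 0 < ℓ < p and p ∣ 1 + ℓ·2^r; the two residues 1 + ℓ·2^r and 1 + ℓ·2^r + n/2 are the only elements of A ∪ B divisible by p, and they both lie in the same one of the two sets A, B; and every other element of A ∪ B is coprime to n. In particular, one of the sets A, B consists entirely of residues coprime to n, while the other contains exactly two residues divisible by p. -/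

import Mathlib

/-!
Since `2^r·p = n`, in `ℤ/nℤ` we have `1 - i·2^r = 1 + (p - i)·2^r`, so every element of `A ∪ B`
is `1 + k·2^r` or `1 + k·2^r + n/2` for some `0 ≤ k ≤ p`, with `k ≤ (p-1)/2` in `A` and
`k > (p-1)/2` in `B`. These are odd because `r ≥ 2`. As `p ∣ n/2` and `2^r` is a unit mod `p`,
such a residue is divisible by `p` iff `k ≡ -2^(-r) (mod p)`, i.e. iff `k = ℓ`. So the two
residues of index `ℓ` are the only multiples of `p`, they lie in `A` or in `B` according as
`ℓ ≤ (p-1)/2` or not, and every other residue is odd and prime to `p`, hence prime to `n`.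
-/

/-- The connection set `A` in `ℤ/nℤ`, `n = 2^r·p`. -/
def connA (n r p : ℕ) : Finset (ZMod n) :=
  ((Finset.range ((p - 1) / 2 + 1)).image fun i => ((1 + i * 2 ^ r : ℕ) : ZMod n)) ∪
  ((Finset.Icc 1 ((p - 1) / 2)).image fun j => ((1 + j * 2 ^ r + n / 2 : ℕ) : ZMod n))

/-- The connection set `B` in `ℤ/nℤ`, `n = 2^r·p`. -/
def connB (n r p : ℕ) : Finset (ZMod n) :=
  ((Finset.range ((p - 1) / 2 + 1)).image fun i => (1 - (i * 2 ^ r : ℕ) : ZMod n)) ∪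
  ((Finset.Icc 1 ((p - 1) / 2)).image fun j =>
    (1 - (j * 2 ^ r : ℕ) + (n / 2 : ℕ) : ZMod n))

theorem dvd_one_add_mul_iff_modEq {p c ℓ : ℕ} (hc : c.Coprime p) (hℓ : p ∣ 1 + ℓ * c) (k : ℕ) :
    p ∣ 1 + k * c ↔ k ≡ ℓ [MOD p] := by
  rw [← ZMod.natCast_eq_zero_iff] at hℓ
  rw [← ZMod.natCast_eq_zero_iff, ← ZMod.natCast_eq_natCast_iff]
  refine Iff.trans ?_ ((ZMod.isUnit_iff_coprime c p).2 hc).mul_left_inj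
  push_cast at hℓ ⊢
  constructor
  · intro h; linear_combination h - hℓ
  · intro h; linear_combination h + hℓ

theorem exists_pos_lt_dvd_one_add_mul {p c : ℕ} (hp : 1 < p) (hc : c.Coprime p) :
    ∃ ℓ, 0 < ℓ ∧ ℓ < p ∧ p ∣ 1 + ℓ * c := by
  have : Fact (1 < p) := ⟨hp⟩
  obtain ⟨u, hu⟩ := (ZMod.isUnit_iff_coprime c p).2 hc
  refine ⟨(-u⁻¹).val.val, Nat.pos_of_ne_zero ?_, ZMod.val_lt _, ?_⟩
  · rw [ZMod.val_ne_zero]; exact Units.ne_zero _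
  · rw [← ZMod.natCast_eq_zero_iff]
    push_cast
    rw [ZMod.natCast_zmod_val, neg_mul, ← hu, Units.inv_mul, add_neg_cancel]

theorem dvd_one_add_mul_iff_eq {p c k ℓ : ℕ} (hc : c.Coprime p) (hℓ0 : 0 < ℓ) (hℓp : ℓ < p)
    (hℓ : p ∣ 1 + ℓ * c) (hk : k ≤ p) : p ∣ 1 + k * c ↔ k = ℓ := by
  rw [dvd_one_add_mul_iff_modEq hc hℓ, Nat.ModEq]
  rcases hk.lt_or_eq with hk | rfl
  · rw [Nat.mod_eq_of_lt hk, Nat.mod_eq_of_lt hℓp]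
  · rw [Nat.mod_self, Nat.mod_eq_of_lt hℓp]
    omega

theorem existsUnique_pos_lt_dvd_one_add_mul {p c : ℕ} (hp : 1 < p) (hc : c.Coprime p) :
    ∃! ℓ, 0 < ℓ ∧ ℓ < p ∧ p ∣ 1 + ℓ * c := by
  obtain ⟨ℓ, hℓ0, hℓp, hℓ⟩ := exists_pos_lt_dvd_one_add_mul hp hc
  refine ⟨ℓ, ⟨hℓ0, hℓp, hℓ⟩, fun k ⟨_, hkp, hk⟩ => ?_⟩
  exact (dvd_one_add_mul_iff_eq hc hℓ0 hℓp hℓ hkp.le).1 hk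

theorem coprime_two_pow_mul_iff {p r a : ℕ} (hp : p.Prime) (hr : r ≠ 0) :
    a.Coprime (2 ^ r * p) ↔ Odd a ∧ ¬ p ∣ a := by
  rw [Nat.coprime_mul_iff_right, Nat.coprime_pow_right_iff (Nat.pos_of_ne_zero hr),
    Nat.coprime_two_right, Nat.coprime_comm, hp.coprime_iff_not_dvd]

theorem two_pow_mul_div_two {r : ℕ} (hr : r ≠ 0) (p : ℕ) :
    2 ^ r * p / 2 = 2 ^ (r - 1) * p := by
  obtain ⟨s, rfl⟩ := Nat.exists_eq_add_of_le' (Nat.pos_of_ne_zero hr)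
  rw [pow_succ, mul_right_comm, Nat.mul_div_cancel _ two_pos, Nat.add_sub_cancel]

theorem ZMod.dvd_val_natCast_iff {d n : ℕ} (hd : d ∣ n) (a : ℕ) :
    d ∣ (a : ZMod n).val ↔ d ∣ a := by
  rw [ZMod.val_natCast, Nat.dvd_mod_iff hd]

theorem ZMod.odd_val_natCast_iff {n : ℕ} (hn : Even n) (a : ℕ) :
    Odd (a : ZMod n).val ↔ Odd a := by
  rw [← Nat.not_even_iff_odd, ← Nat.not_even_iff_odd, even_iff_two_dvd, even_iff_two_dvd,
    ZMod.dvd_val_natCast_iff (even_iff_two_dvd.1 hn)]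

def connPair (n r k : ℕ) : Finset (ZMod n) :=
  {((1 + k * 2 ^ r : ℕ) : ZMod n), ((1 + k * 2 ^ r + n / 2 : ℕ) : ZMod n)}

section

variable {p r n k ℓ : ℕ} {x : ZMod n}

theorem card_connPair (hn : 2 ≤ n) : (connPair n r k).card = 2 := by
  refine Finset.card_pair fun h => ?_
  have : ((n / 2 : ℕ) : ZMod n) = 0 := by
    push_cast at h ⊢; linear_combination -h
  rw [ZMod.natCast_eq_zero_iff] at this
  exact Nat.not_dvd_of_pos_of_lt (by omega) (by omega) this

theorem odd_val_of_mem_connPair (hr : 2 ≤ r) (hn : n = 2 ^ r * p)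
    (hx : x ∈ connPair n r k) : Odd x.val := by
  have h2r : Even (2 ^ r) := (Nat.even_pow' (by omega)).2 even_two
  have hodd : Odd (1 + k * 2 ^ r) := (h2r.mul_left k).one_add
  have hne : Even n := hn ▸ h2r.mul_right p
  have hhalf : Even (n / 2) := by
    rw [hn, two_pow_mul_div_two (by omega)]
    exact ((Nat.even_pow' (by omega)).2 even_two).mul_right p
  simp only [connPair, Finset.mem_insert, Finset.mem_singleton] at hx
  rcases hx with rfl | rfl <;> rw [ZMod.odd_val_natCast_iff hne]
  exacts [hodd, hodd.add_even hhalf]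

theorem dvd_val_of_mem_connPair_iff (hr : r ≠ 0) (hn : n = 2 ^ r * p)
    (hx : x ∈ connPair n r k) : p ∣ x.val ↔ p ∣ 1 + k * 2 ^ r := by
  have hpn : p ∣ n := hn ▸ dvd_mul_left p _
  have hphalf : p ∣ n / 2 := by
    rw [hn, two_pow_mul_div_two hr]
    exact dvd_mul_left p _
  simp only [connPair, Finset.mem_insert, Finset.mem_singleton] at hx
  rcases hx with rfl | rfl <;> rw [ZMod.dvd_val_natCast_iff hpn]
  exact Nat.dvd_add_left hphalf

theorem one_sub_natCast_mul_eq (hn : n = 2 ^ r * p) {i : ℕ} (hi : i ≤ p) :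
    1 - ((i * 2 ^ r : ℕ) : ZMod n) = ((1 + (p - i) * 2 ^ r : ℕ) : ZMod n) := by
  have hn0 : ((2 ^ r * p : ℕ) : ZMod n) = 0 := hn ▸ ZMod.natCast_self n
  push_cast [hi] at hn0 ⊢
  linear_combination -hn0

theorem exists_mem_connPair_of_mem_connA (hx : x ∈ connA n r p) :
    ∃ k ≤ (p - 1) / 2, x ∈ connPair n r k := by
  simp only [connA, Finset.mem_union, Finset.mem_image, Finset.mem_range, Finset.mem_Icc,
    Nat.lt_succ_iff] at hx
  rcases hx with ⟨k, hk, rfl⟩ | ⟨k, ⟨-, hk⟩, rfl⟩ <;> exact ⟨k, hk, by simp [connPair]⟩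

theorem exists_mem_connPair_of_mem_connB (hodd : Odd p) (hn : n = 2 ^ r * p)
    (hx : x ∈ connB n r p) : ∃ k, (p - 1) / 2 < k ∧ k ≤ p ∧ x ∈ connPair n r k := by
  have hp := hodd.pos
  simp only [connB, Finset.mem_union, Finset.mem_image, Finset.mem_range, Finset.mem_Icc,
    Nat.lt_succ_iff] at hx
  rcases hx with ⟨i, hi, rfl⟩ | ⟨i, ⟨hi0, hi⟩, rfl⟩ <;>
    refine ⟨p - i, by omega, by omega, ?_⟩ <;>
    rw [one_sub_natCast_mul_eq hn (by omega)]
  · exact Finset.mem_insert_self _ _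
  · rw [← Nat.cast_add]
    exact Finset.mem_insert_of_mem (Finset.mem_singleton_self _)

theorem exists_mem_connPair_of_mem_union (hodd : Odd p) (hn : n = 2 ^ r * p)
    (hx : x ∈ connA n r p ∪ connB n r p) : ∃ k ≤ p, x ∈ connPair n r k := by
  rcases Finset.mem_union.1 hx with hx | hx
  · obtain ⟨k, hk, hx⟩ := exists_mem_connPair_of_mem_connA hx
    exact ⟨k, by omega, hx⟩
  · obtain ⟨k, -, hk, hx⟩ := exists_mem_connPair_of_mem_connB hodd hn hx
    exact ⟨k, hk, hx⟩

theorem connPair_subset_connA (hk0 : 0 < k) (hk : k ≤ (p - 1) / 2) :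
    connPair n r k ⊆ connA n r p := by
  intro x hx
  simp only [connPair, Finset.mem_insert, Finset.mem_singleton] at hx
  simp only [connA, Finset.mem_union, Finset.mem_image, Finset.mem_range, Finset.mem_Icc,
    Nat.lt_succ_iff]
  rcases hx with rfl | rfl
  exacts [Or.inl ⟨k, hk, rfl⟩, Or.inr ⟨k, ⟨hk0, hk⟩, rfl⟩]

theorem connPair_subset_connB (hodd : Odd p) (hn : n = 2 ^ r * p) (hk0 : (p - 1) / 2 < k)
    (hk : k < p) : connPair n r k ⊆ connB n r p := by
  have hsub : 1 - (((p - k) * 2 ^ r : ℕ) : ZMod n) = ((1 + k * 2 ^ r : ℕ) : ZMod n) := by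
    rw [one_sub_natCast_mul_eq hn (Nat.sub_le p k), Nat.sub_sub_self hk.le]
  intro x hx
  simp only [connPair, Finset.mem_insert, Finset.mem_singleton] at hx
  simp only [connB, Finset.mem_union, Finset.mem_image, Finset.mem_range, Finset.mem_Icc,
    Nat.lt_succ_iff]
  obtain ⟨m, hm⟩ := hodd
  rcases hx with rfl | rfl
  · exact Or.inl ⟨p - k, by omega, hsub⟩
  · exact Or.inr ⟨p - k, ⟨by omega, by omega⟩, by rw [hsub, ← Nat.cast_add]⟩

theorem connPair_subset_connA_or_connB (hodd : Odd p) (hn : n = 2 ^ r * p) (hk0 : 0 < k)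
    (hk : k < p) : connPair n r k ⊆ connA n r p ∨ connPair n r k ⊆ connB n r p := by
  rcases le_or_gt k ((p - 1) / 2) with hkm | hkm
  · exact Or.inl (connPair_subset_connA hk0 hkm)
  · exact Or.inr (connPair_subset_connB hodd hn hkm hk)

theorem odd_val_of_mem_union (hodd : Odd p) (hr : 2 ≤ r) (hn : n = 2 ^ r * p)
    (hx : x ∈ connA n r p ∪ connB n r p) : Odd x.val := by
  obtain ⟨k, -, hxk⟩ := exists_mem_connPair_of_mem_union hodd hn hx
  exact odd_val_of_mem_connPair hr hn hxk

theorem coprime_val_of_not_dvd (hp : p.Prime) (hodd : Odd p) (hr : 2 ≤ r)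
    (hn : n = 2 ^ r * p) (hx : x ∈ connA n r p ∪ connB n r p) (hpx : ¬ p ∣ x.val) :
    x.val.Coprime n := by
  have h := (coprime_two_pow_mul_iff (a := x.val) hp (by omega : r ≠ 0)).2
    ⟨odd_val_of_mem_union hodd hr hn hx, hpx⟩
  rwa [← hn] at h

theorem dvd_val_of_mem_connPair_iff_eq (hodd : Odd p) (hr : r ≠ 0)
    (hn : n = 2 ^ r * p) (hℓ0 : 0 < ℓ) (hℓp : ℓ < p) (hℓ : p ∣ 1 + ℓ * 2 ^ r) (hk : k ≤ p)
    (hx : x ∈ connPair n r k) : p ∣ x.val ↔ k = ℓ := by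
  rw [dvd_val_of_mem_connPair_iff hr hn hx,
    dvd_one_add_mul_iff_eq (Nat.Coprime.pow_left r (Nat.coprime_two_left.2 hodd)) hℓ0 hℓp hℓ hk]

theorem dvd_val_iff_mem_connPair (hodd : Odd p) (hr : r ≠ 0) (hn : n = 2 ^ r * p)
    (hℓ0 : 0 < ℓ) (hℓp : ℓ < p) (hℓ : p ∣ 1 + ℓ * 2 ^ r)
    (hx : x ∈ connA n r p ∪ connB n r p) : p ∣ x.val ↔ x ∈ connPair n r ℓ := by
  obtain ⟨k, hk, hxk⟩ := exists_mem_connPair_of_mem_union hodd hn hx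
  refine ⟨fun h => ?_, fun h => (dvd_val_of_mem_connPair_iff hr hn h).2 hℓ⟩
  rwa [← (dvd_val_of_mem_connPair_iff_eq hodd hr hn hℓ0 hℓp hℓ hk hxk).1 h]

theorem filter_dvd_val_eq_connPair (hodd : Odd p) (hr : r ≠ 0)
    (hn : n = 2 ^ r * p) (hℓ0 : 0 < ℓ) (hℓp : ℓ < p) (hℓ : p ∣ 1 + ℓ * 2 ^ r)
    {S : Finset (ZMod n)} (hS : S ⊆ connA n r p ∪ connB n r p) (hℓS : connPair n r ℓ ⊆ S) :
    S.filter (fun x => p ∣ x.val) = connPair n r ℓ := by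
  ext x
  have hdvd := fun hx => dvd_val_iff_mem_connPair (x := x) hodd hr hn hℓ0 hℓp hℓ (hS hx)
  rw [Finset.mem_filter]
  exact ⟨fun ⟨hx, h⟩ => (hdvd hx).1 h, fun h => ⟨hℓS h, (hdvd (hℓS h)).2 h⟩⟩

theorem coprime_val_of_mem_connA (hp : p.Prime) (hodd : Odd p) (hr : 2 ≤ r)
    (hn : n = 2 ^ r * p) (hℓ0 : 0 < ℓ) (hℓp : ℓ < p) (hℓ : p ∣ 1 + ℓ * 2 ^ r)
    (hℓm : (p - 1) / 2 < ℓ) (hx : x ∈ connA n r p) : x.val.Coprime n := by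
  refine coprime_val_of_not_dvd hp hodd hr hn (Finset.mem_union_left _ hx) fun h => ?_
  obtain ⟨k, hk, hxk⟩ := exists_mem_connPair_of_mem_connA hx
  have := (dvd_val_of_mem_connPair_iff_eq hodd (by omega) hn hℓ0 hℓp hℓ (by omega) hxk).1 h
  omega

theorem coprime_val_of_mem_connB (hp : p.Prime) (hodd : Odd p) (hr : 2 ≤ r)
    (hn : n = 2 ^ r * p) (hℓ0 : 0 < ℓ) (hℓp : ℓ < p) (hℓ : p ∣ 1 + ℓ * 2 ^ r)
    (hℓm : ℓ ≤ (p - 1) / 2) (hx : x ∈ connB n r p) : x.val.Coprime n := by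
  refine coprime_val_of_not_dvd hp hodd hr hn (Finset.mem_union_right _ hx) fun h => ?_
  obtain ⟨k, hk, hkp, hxk⟩ := exists_mem_connPair_of_mem_connB hodd hn hx
  have := (dvd_val_of_mem_connPair_iff_eq hodd (by omega) hn hℓ0 hℓp hℓ hkp hxk).1 h
  omega

end

theorem connection_sets_divisibility_general (p r : ℕ) (hp : p.Prime) (hodd : Odd p)
    (hr : 2 ≤ r) (n : ℕ) (hn : n = 2 ^ r * p) :
    (∀ x ∈ connA n r p ∪ connB n r p, Odd x.val) ∧
    (∃! ℓ : ℕ, 0 < ℓ ∧ ℓ < p ∧ p ∣ 1 + ℓ * 2 ^ r) ∧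
    (∀ ℓ : ℕ, 0 < ℓ → ℓ < p → p ∣ 1 + ℓ * 2 ^ r →
      (∀ x ∈ connA n r p ∪ connB n r p,
        p ∣ x.val ↔
          (x = ((1 + ℓ * 2 ^ r : ℕ) : ZMod n) ∨
           x = ((1 + ℓ * 2 ^ r + n / 2 : ℕ) : ZMod n))) ∧
      ((((1 + ℓ * 2 ^ r : ℕ) : ZMod n) ∈ connA n r p ∧
          ((1 + ℓ * 2 ^ r + n / 2 : ℕ) : ZMod n) ∈ connA n r p) ∨
       (((1 + ℓ * 2 ^ r : ℕ) : ZMod n) ∈ connB n r p ∧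
          ((1 + ℓ * 2 ^ r + n / 2 : ℕ) : ZMod n) ∈ connB n r p)) ∧
      (∀ x ∈ connA n r p ∪ connB n r p,
        x ≠ ((1 + ℓ * 2 ^ r : ℕ) : ZMod n) →
        x ≠ ((1 + ℓ * 2 ^ r + n / 2 : ℕ) : ZMod n) →
        Nat.Coprime x.val n)) ∧
    (((∀ x ∈ connA n r p, Nat.Coprime x.val n) ∧
        ((connB n r p).filter fun x => p ∣ x.val).card = 2) ∨
     ((∀ x ∈ connB n r p, Nat.Coprime x.val n) ∧
        ((connA n r p).filter fun x => p ∣ x.val).card = 2)) := by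
  have hr0 : r ≠ 0 := by omega
  have hn2 : 2 ≤ n := hn ▸ hp.two_le.trans (Nat.le_mul_of_pos_left p (by positivity))
  have hc : (2 ^ r).Coprime p := Nat.Coprime.pow_left r (Nat.coprime_two_left.2 hodd)
  have hℓ := existsUnique_pos_lt_dvd_one_add_mul hp.one_lt hc
  have mem_pair : ∀ {ℓ}, ((1 + ℓ * 2 ^ r : ℕ) : ZMod n) ∈ connPair n r ℓ ∧
      ((1 + ℓ * 2 ^ r + n / 2 : ℕ) : ZMod n) ∈ connPair n r ℓ := by
    simp [connPair]
  refine ⟨fun x hx => odd_val_of_mem_union hodd hr hn hx, hℓ,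
    fun ℓ hℓ0 hℓp hℓ => ⟨?_, ?_, ?_⟩, ?_⟩
  · intro x hx
    rw [dvd_val_iff_mem_connPair hodd hr0 hn hℓ0 hℓp hℓ hx]
    simp only [connPair, Finset.mem_insert, Finset.mem_singleton]
  · exact (connPair_subset_connA_or_connB hodd hn hℓ0 hℓp).imp
      (fun h => ⟨h mem_pair.1, h mem_pair.2⟩) (fun h => ⟨h mem_pair.1, h mem_pair.2⟩)
  · intro x hx h1 h2
    refine coprime_val_of_not_dvd hp hodd hr hn hx ?_
    rw [dvd_val_iff_mem_connPair hodd hr0 hn hℓ0 hℓp hℓ hx]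
    simp only [connPair, Finset.mem_insert, Finset.mem_singleton]
    exact not_or.2 ⟨h1, h2⟩
  · obtain ⟨ℓ, hℓ0, hℓp, hℓ⟩ := hℓ.exists
    rcases le_or_gt ℓ ((p - 1) / 2) with hℓm | hℓm
    · refine Or.inr ⟨fun x hx => coprime_val_of_mem_connB hp hodd hr hn hℓ0 hℓp hℓ hℓm hx, ?_⟩
      rw [filter_dvd_val_eq_connPair hodd hr0 hn hℓ0 hℓp hℓ Finset.subset_union_left
        (connPair_subset_connA hℓ0 hℓm), card_connPair hn2]
    · refine Or.inl ⟨fun x hx => coprime_val_of_mem_connA hp hodd hr hn hℓ0 hℓp hℓ hℓm hx, ?_⟩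
      rw [filter_dvd_val_eq_connPair hodd hr0 hn hℓ0 hℓp hℓ Finset.subset_union_right
        (connPair_subset_connB hodd hn hℓm hℓp), card_connPair hn2]

/-- For `n = 2^r·p` (`p` an odd prime, `r ≥ 2`): every element of `A ∪ B` is odd;
there is a unique `0 < ℓ < p` with `p ∣ 1 + ℓ·2^r`; the residues `1 + ℓ·2^r` and
`1 + ℓ·2^r + n/2` are the only elements of `A ∪ B` divisible by `p`, they lie in
the same one of the two sets, and every other element of `A ∪ B` is coprime to
`n`.  In particular one of `A`, `B` consists of residues coprime to `n` while the
other contains exactly two residues divisible by `p`. -/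
theorem connection_sets_divisibility (p r : ℕ) (hp : p.Prime) (hodd : Odd p)
    (hr : 2 ≤ r) (n : ℕ) [NeZero n] (hn : n = 2 ^ r * p) :
    (∀ x ∈ connA n r p ∪ connB n r p, Odd x.val) ∧
    (∃! ℓ : ℕ, 0 < ℓ ∧ ℓ < p ∧ p ∣ 1 + ℓ * 2 ^ r) ∧
    (∀ ℓ : ℕ, 0 < ℓ → ℓ < p → p ∣ 1 + ℓ * 2 ^ r →
      (∀ x ∈ connA n r p ∪ connB n r p,
        p ∣ x.val ↔
          (x = ((1 + ℓ * 2 ^ r : ℕ) : ZMod n) ∨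
           x = ((1 + ℓ * 2 ^ r + n / 2 : ℕ) : ZMod n))) ∧
      ((((1 + ℓ * 2 ^ r : ℕ) : ZMod n) ∈ connA n r p ∧
          ((1 + ℓ * 2 ^ r + n / 2 : ℕ) : ZMod n) ∈ connA n r p) ∨
       (((1 + ℓ * 2 ^ r : ℕ) : ZMod n) ∈ connB n r p ∧
          ((1 + ℓ * 2 ^ r + n / 2 : ℕ) : ZMod n) ∈ connB n r p)) ∧
      (∀ x ∈ connA n r p ∪ connB n r p,
        x ≠ ((1 + ℓ * 2 ^ r : ℕ) : ZMod n) →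
        x ≠ ((1 + ℓ * 2 ^ r + n / 2 : ℕ) : ZMod n) →
        Nat.Coprime x.val n)) ∧
    (((∀ x ∈ connA n r p, Nat.Coprime x.val n) ∧
        ((connB n r p).filter fun x => p ∣ x.val).card = 2) ∨
     ((∀ x ∈ connB n r p, Nat.Coprime x.val n) ∧
        ((connA n r p).filter fun x => p ∣ x.val).card = 2)) :=
  connection_sets_divisibility_general p r hp hodd hr n hn
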